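/- Let ρ > 0, α > 0, and x = αe ∈ ℝⁿ where e is the all-ones vector. Then prox_{(1/ρ)h₁}(x) = {0} if α < √(2/(ρ√n)); prox_{(1/ρ)h₁}(x) = {0, x} if α = √(2/(ρ√n)); and prox_{(1/ρ)h₁}(x) = {x} if α > √(2/(ρ√n)). -/

import Mathlib

/-- The ℓ₁ norm on `ℝⁿ`. -/
noncomputable def l1norm {n : ℕ} (x : Fin n → ℝ) : ℝ := ∑ i, |x i|

/-- The ℓ₂ norm on `ℝⁿ`. -/
noncomputable def l2norm {n : ℕ} (x : Fin n → ℝ) : ℝ := Real.sqrt (∑ i, (x i) ^ 2)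

-- `h₁(x) = ‖x‖₁/‖x‖₂` for `x ≠ 0`, and `h₁(0) = 0`.
open Classical in
noncomputable def h1 {n : ℕ} (x : Fin n → ℝ) : ℝ :=
  if x = 0 then 0 else l1norm x / l2norm x

/-- `prox_{(1/ρ) f}(z)`: the set of global minimizers of `(ρ/2)‖u - z‖₂² + f(u)`. -/
noncomputable def proxSet {n : ℕ} (ρ : ℝ) (f : (Fin n → ℝ) → ℝ) (z : Fin n → ℝ) :
    Set (Fin n → ℝ) :=
  {u | ∀ v : Fin n → ℝ,
    ρ / 2 * (∑ i, (u i - z i) ^ 2) + f u ≤ ρ / 2 * (∑ i, (v i - z i) ^ 2) + f v}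

/-! At `z = α e` write `F` for the prox objective, `q = ‖u‖₂` and `s = ‖u‖₁`. Then
`F 0 = ρ n α² / 2`, `F (α e) = √n`, and every other `u` has `F u > min (F 0) (F (α e))`:
if `ρ α q ≤ 1`, the bound `s / q ≥ 1 + ρ α (s - q)` gives `F u > F 0`; if `ρ α q > 1`,
`F u - √n = ρ/2 (q - α √n)² + ρ α (s - ∑ uᵢ) + (√n q - s) (ρ α - 1/q)`, a sum of nonnegative
terms by `∑ uᵢ ≤ s ≤ √n q`. The threshold `α = √(2 / (ρ √n))` is where `F 0 = √n`. -/

open Finset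

noncomputable def proxObjective {n : ℕ} (ρ : ℝ) (f : (Fin n → ℝ) → ℝ) (z u : Fin n → ℝ) : ℝ :=
  ρ / 2 * (∑ i, (u i - z i) ^ 2) + f u

def minimizers {X β : Type*} [LE β] (F : X → β) : Set X := {u | ∀ v, F u ≤ F v}

theorem proxSet_eq_minimizers {n : ℕ} (ρ : ℝ) (f : (Fin n → ℝ) → ℝ) (z : Fin n → ℝ) :
    proxSet ρ f z = minimizers (proxObjective ρ f z) :=
  rfl

section TwoCandidates

variable {X β : Type*} [LinearOrder β] {F : X → β} {a b : X}

theorem eq_or_eq_of_mem_minimizers (h : ∀ u, u ≠ a → u ≠ b → min (F a) (F b) < F u)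
    {u : X} (hu : u ∈ minimizers F) : u = a ∨ u = b := by
  by_contra! hne
  exact (le_min (hu a) (hu b)).not_gt (h u hne.1 hne.2)

theorem mem_minimizers_of_le_of_le (h : ∀ u, u ≠ a → u ≠ b → min (F a) (F b) < F u)
    {u : X} (ha : F u ≤ F a) (hb : F u ≤ F b) : u ∈ minimizers F := by
  intro v
  by_cases hva : v = a
  · exact hva ▸ ha
  by_cases hvb : v = b
  · exact hvb ▸ hb
  exact (le_min ha hb).trans (h v hva hvb).le

theorem minimizers_eq_singleton_of_lt (h : ∀ u, u ≠ a → u ≠ b → min (F a) (F b) < F u)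
    (hab : F a < F b) : minimizers F = {a} := by
  ext u
  refine ⟨fun hu => ?_, fun hu => mem_minimizers_of_le_of_le h (hu ▸ le_rfl) (hu ▸ hab.le)⟩
  refine (eq_or_eq_of_mem_minimizers h hu).resolve_right fun hub => ?_
  exact (hu a).not_gt (hub ▸ hab)

theorem minimizers_eq_pair (h : ∀ u, u ≠ a → u ≠ b → min (F a) (F b) < F u)
    (hab : F a = F b) : minimizers F = {a, b} := by
  ext u
  refine ⟨eq_or_eq_of_mem_minimizers h, ?_⟩
  rintro (rfl | rfl)
  · exact mem_minimizers_of_le_of_le h le_rfl hab.le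
  · exact mem_minimizers_of_le_of_le h hab.ge le_rfl

theorem minimizers_eq_singleton_of_gt (h : ∀ u, u ≠ a → u ≠ b → min (F a) (F b) < F u)
    (hab : F b < F a) : minimizers F = {b} :=
  minimizers_eq_singleton_of_lt (fun u hub hua => min_comm (F a) (F b) ▸ h u hua hub) hab

end TwoCandidates

section Norms

variable {n : ℕ} (u : Fin n → ℝ)

theorem l2norm_sq : l2norm u ^ 2 = ∑ i, u i ^ 2 :=
  Real.sq_sqrt (sum_nonneg fun i _ => sq_nonneg (u i))

theorem l2norm_pos {u : Fin n → ℝ} (hu : u ≠ 0) : 0 < l2norm u := by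
  obtain ⟨i, hi⟩ := Function.ne_iff.mp hu
  exact Real.sqrt_pos.mpr <|
    sum_pos' (fun j _ => sq_nonneg (u j)) ⟨i, mem_univ i, sq_pos_of_ne_zero hi⟩

theorem l1norm_nonneg : 0 ≤ l1norm u :=
  sum_nonneg fun i _ => abs_nonneg (u i)

theorem sum_le_l1norm : ∑ i, u i ≤ l1norm u :=
  sum_le_sum fun i _ => le_abs_self (u i)

theorem l2norm_le_l1norm : l2norm u ≤ l1norm u := by
  have h := sum_sq_le_sq_sum_of_nonneg (s := univ) (f := fun i => |u i|) fun i _ => abs_nonneg _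
  simp only [sq_abs] at h
  exact Real.sqrt_le_iff.mpr ⟨l1norm_nonneg u, h⟩

theorem l1norm_le_sqrt_card_mul_l2norm : l1norm u ≤ Real.sqrt n * l2norm u := by
  have h := sq_sum_le_card_mul_sum_sq (s := univ) (f := fun i => |u i|)
  simp only [sq_abs, card_univ, Fintype.card_fin] at h
  rw [l2norm, ← Real.sqrt_mul (Nat.cast_nonneg n)]
  exact Real.le_sqrt_of_sq_le h

theorem sum_sub_const_sq (α : ℝ) :
    ∑ i, (u i - α) ^ 2 = l2norm u ^ 2 - 2 * α * ∑ i, u i + n * α ^ 2 := by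
  rw [sum_congr rfl fun i _ => show (u i - α) ^ 2 = u i ^ 2 - 2 * α * u i + α ^ 2 by ring]
  simp only [l2norm_sq, sum_add_distrib, sum_sub_distrib, ← mul_sum, sum_const, card_univ,
    Fintype.card_fin, nsmul_eq_mul]

theorem eq_const_of_sum_sub_sq_nonpos {α : ℝ} (h : ∑ i, (u i - α) ^ 2 ≤ 0) :
    u = fun _ => α := by
  funext i
  have hi := (sum_eq_zero_iff_of_nonneg fun j _ => sq_nonneg (u j - α)).mp
    (h.antisymm (sum_nonneg fun j _ => sq_nonneg _)) i (mem_univ i)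
  exact sub_eq_zero.mp (pow_eq_zero_iff two_ne_zero |>.mp hi)

end Norms

theorem h1_of_ne_zero {n : ℕ} {u : Fin n → ℝ} (hu : u ≠ 0) : h1 u = l1norm u / l2norm u :=
  if_neg hu

theorem h1_const {n : ℕ} {α : ℝ} (hα : α ≠ 0) : h1 (fun _ : Fin n => α) = Real.sqrt n := by
  rcases n.eq_zero_or_pos with rfl | hn
  · simp [h1, Subsingleton.elim (fun _ : Fin 0 => α) 0]
  have hne : (fun _ : Fin n => α) ≠ 0 := fun h => hα (congrFun h ⟨0, hn⟩)
  have hl1 : l1norm (fun _ : Fin n => α) = n * |α| := by simp [l1norm]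
  have hl2 : l2norm (fun _ : Fin n => α) = Real.sqrt n * |α| := by
    simp [l2norm, Real.sqrt_mul (Nat.cast_nonneg n), Real.sqrt_sq_eq_abs]
  rw [h1_of_ne_zero hne, hl1, hl2, mul_div_mul_right _ _ (abs_ne_zero.mpr hα), Real.div_sqrt]

section ProxOfConst

variable {n : ℕ} {ρ α : ℝ}

theorem proxObjective_self (f : (Fin n → ℝ) → ℝ) (z : Fin n → ℝ) :
    proxObjective ρ f z z = f z := by
  simp [proxObjective]

theorem proxObjective_h1_const_zero :
    proxObjective ρ h1 (fun _ : Fin n => α) 0 = ρ / 2 * (n * α ^ 2) := by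
  simp [proxObjective, h1]

theorem proxObjective_h1_const_const (hα : α ≠ 0) :
    proxObjective ρ h1 (fun _ : Fin n => α) (fun _ => α) = Real.sqrt n := by
  rw [proxObjective_self, h1_const hα]

theorem proxObjective_h1_const_of_ne_zero {u : Fin n → ℝ} (hu : u ≠ 0) :
    proxObjective ρ h1 (fun _ : Fin n => α) u =
      ρ / 2 * (l2norm u ^ 2 - 2 * α * ∑ i, u i + n * α ^ 2) + l1norm u / l2norm u := by
  rw [proxObjective, sum_sub_const_sq, h1_of_ne_zero hu]

theorem proxObjective_h1_const_zero_lt (hρ : 0 < ρ) (hα : 0 < α) {u : Fin n → ℝ} (hu : u ≠ 0)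
    (h : ρ * α * l2norm u ≤ 1) :
    proxObjective ρ h1 (fun _ : Fin n => α) 0 < proxObjective ρ h1 (fun _ : Fin n => α) u := by
  rw [proxObjective_h1_const_zero, proxObjective_h1_const_of_ne_zero hu]
  set s := l1norm u
  set q := l2norm u
  have hq : 0 < q := l2norm_pos hu
  have hqs : q ≤ s := l2norm_le_l1norm u
  have hPs : ∑ i, u i ≤ s := sum_le_l1norm u
  -- `(s - q) * (1 - ρ α q) ≥ 0`
  have hratio : 1 + ρ * α * (s - q) ≤ s / q := by
    rw [le_div_iff₀ hq]
    nlinarith [mul_nonneg (sub_nonneg.2 hqs) (sub_nonneg.2 h)]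
  nlinarith [mul_pos hρ (mul_pos hq hq), mul_nonneg (mul_pos hρ hα).le (sub_nonneg.2 hPs)]

theorem proxObjective_h1_const_const_lt (hρ : 0 < ρ) (hα : 0 < α) {u : Fin n → ℝ}
    (hu0 : u ≠ 0) (hu : u ≠ fun _ => α) (h : 1 < ρ * α * l2norm u) :
    proxObjective ρ h1 (fun _ : Fin n => α) (fun _ => α) <
      proxObjective ρ h1 (fun _ : Fin n => α) u := by
  have hT := sum_sub_const_sq u α
  rw [proxObjective_h1_const_const hα.ne', proxObjective_h1_const_of_ne_zero hu0]
  set s := l1norm u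
  set q := l2norm u
  set P := ∑ i, u i
  set r := Real.sqrt n
  have hq : 0 < q := l2norm_pos hu0
  have hr2 : r ^ 2 = n := Real.sq_sqrt (Nat.cast_nonneg n)
  have hPs : P ≤ s := sum_le_l1norm u
  have hsr : s ≤ r * q := l1norm_le_sqrt_card_mul_l2norm u
  have hgap : 0 < ρ * α - 1 / q := by rw [sub_pos, div_lt_iff₀ hq]; linarith
  -- every summand after `r` is nonnegative, and all of them vanish only at `u = α e`
  have hdecomp : ρ / 2 * (q ^ 2 - 2 * α * P + n * α ^ 2) + s / q =
      r + ρ / 2 * (q - α * r) ^ 2 + ρ * α * (s - P) + (r * q - s) * (ρ * α - 1 / q) := by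
    rw [← hr2]
    field_simp
    ring
  rw [hdecomp]
  by_contra! hle
  have hA0 : 0 ≤ ρ / 2 * (q - α * r) ^ 2 := by positivity
  have hB0 : 0 ≤ ρ * α * (s - P) := mul_nonneg (mul_pos hρ hα).le (sub_nonneg.2 hPs)
  have hC0 : 0 ≤ (r * q - s) * (ρ * α - 1 / q) := mul_nonneg (sub_nonneg.2 hsr) hgap.le
  have hA : ρ / 2 * (q - α * r) ^ 2 ≤ 0 := by linarith
  have hB : ρ * α * (s - P) ≤ 0 := by linarith
  have hC : (r * q - s) * (ρ * α - 1 / q) ≤ 0 := by linarith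
  have hA' := nonpos_of_mul_nonpos_right hA (by positivity)
  have hB' := nonpos_of_mul_nonpos_right hB (mul_pos hρ hα)
  have hC' := nonpos_of_mul_nonpos_left hC hgap
  refine hu (eq_const_of_sum_sub_sq_nonpos u ?_)
  rw [hT, ← hr2]
  nlinarith

theorem min_proxObjective_h1_const_lt (hρ : 0 < ρ) (hα : 0 < α) {u : Fin n → ℝ} (hu0 : u ≠ 0)
    (hu : u ≠ fun _ => α) :
    min (proxObjective ρ h1 (fun _ : Fin n => α) 0)
        (proxObjective ρ h1 (fun _ : Fin n => α) fun _ => α) <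
      proxObjective ρ h1 (fun _ : Fin n => α) u := by
  rcases le_or_gt (ρ * α * l2norm u) 1 with h | h
  · exact min_lt_of_left_lt (proxObjective_h1_const_zero_lt hρ hα hu0 h)
  · exact min_lt_of_right_lt (proxObjective_h1_const_const_lt hρ hα hu0 hu h)

end ProxOfConst

section Threshold

variable {ρ x α : ℝ}

theorem lt_sqrt_two_div_iff (hρ : 0 < ρ) (hx : 0 < x) (hα : 0 ≤ α) :
    α < Real.sqrt (2 / (ρ * Real.sqrt x)) ↔ ρ / 2 * (x * α ^ 2) < Real.sqrt x := by
  have hr := Real.sqrt_pos.2 hx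
  have hr2 := Real.sq_sqrt hx.le
  rw [Real.lt_sqrt hα, lt_div_iff₀ (mul_pos hρ hr)]
  constructor <;> intro h <;> nlinarith

theorem sqrt_two_div_lt_iff (hρ : 0 < ρ) (hx : 0 < x) (hα : 0 < α) :
    Real.sqrt (2 / (ρ * Real.sqrt x)) < α ↔ Real.sqrt x < ρ / 2 * (x * α ^ 2) := by
  have hr := Real.sqrt_pos.2 hx
  have hr2 := Real.sq_sqrt hx.le
  rw [Real.sqrt_lt' hα, div_lt_iff₀ (mul_pos hρ hr)]
  constructor <;> intro h <;> nlinarith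

end Threshold

theorem stmt_13 {n : ℕ} (ρ α : ℝ) (hρ : 0 < ρ) (hα : 0 < α) :
    (α < Real.sqrt (2 / (ρ * Real.sqrt n)) →
      proxSet ρ h1 (fun _ : Fin n => α) = {0}) ∧
    (α = Real.sqrt (2 / (ρ * Real.sqrt n)) →
      proxSet ρ h1 (fun _ : Fin n => α) = {0, fun _ => α}) ∧
    (Real.sqrt (2 / (ρ * Real.sqrt n)) < α →
      proxSet ρ h1 (fun _ : Fin n => α) = {fun _ => α}) := by
  rcases n.eq_zero_or_pos with rfl | hn
  -- for `n = 0` the threshold is `√(2 / 0) = 0` and `ℝ⁰` is a single point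
  · simp only [Nat.cast_zero, Real.sqrt_zero, mul_zero, div_zero]
    refine ⟨fun h => absurd h hα.not_gt, fun h => absurd h hα.ne', fun _ => ?_⟩
    ext u
    exact ⟨fun _ => Subsingleton.elim _ _, fun _ v => Subsingleton.elim u v ▸ le_rfl⟩
  have hn' : (0 : ℝ) < n := Nat.cast_pos.2 hn
  have key := fun u : Fin n → ℝ => min_proxObjective_h1_const_lt (u := u) hρ hα
  rw [proxSet_eq_minimizers]
  refine ⟨fun h => minimizers_eq_singleton_of_lt key ?_, fun h => minimizers_eq_pair key ?_,
    fun h => minimizers_eq_singleton_of_gt key ?_⟩ <;>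
    rw [proxObjective_h1_const_zero, proxObjective_h1_const_const hα.ne']
  · exact (lt_sqrt_two_div_iff hρ hn' hα.le).1 h
  · exact le_antisymm (not_lt.1 fun h' => ((sqrt_two_div_lt_iff hρ hn' hα).2 h').ne' h)
      (not_lt.1 fun h' => ((lt_sqrt_two_div_iff hρ hn' hα.le).2 h').ne h)
  · exact (sqrt_two_div_lt_iff hρ hn' hα).1 h
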